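/- Let n ≥ 3 and 1 ≤ k ≤ n-1, and let λ_k + ρ = (n-1, n-2, ..., k+1, k, k, k-1, ..., 1) ∈ Z^n (the coordinate k appears twice). Then any vector in the signed-permutation orbit of λ_k + ρ whose coordinates satisfy μ_1 > μ_2 and μ_3 > ... > μ_n > 0 must have k or -k among its first two coordinates, and cannot have both first coordinates equal to ±k unless they are (k, -k). -/
import Mathlib


/-- Let `n ≥ 3`, `1 ≤ k ≤ n-1`, and `λₖ + ρ = (n-1, n-2, …, k+1, k, k, k-1, …, 1) ∈ ℤⁿ`
(the value `k` appears twice).  Any vector `v` in the signed-permutation orbit of `λₖ + ρ`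
with `v₁ > v₂` and `v₃ > … > vₙ > 0` must have `k` or `-k` among its first two coordinates,
and cannot have both first coordinates equal to `±k` unless they are `(k, -k)`. -/
theorem stmt9 (n k : ℕ) (hn : 3 ≤ n) (hk1 : 1 ≤ k) (hk2 : k ≤ n - 1)
    (lam : Fin n → ℤ)
    (hlam : lam = fun i : Fin n =>
      if (i : ℕ) ≤ n - 1 - k then (n : ℤ) - 1 - (i : ℕ) else (n : ℤ) - (i : ℕ))
    (v : Fin n → ℤ)
    (hv : ∃ (σ : Equiv.Perm (Fin n)) (ε : Fin n → ℤ), (∀ i, ε i = 1 ∨ ε i = -1) ∧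
      ∀ i, v i = ε i * lam (σ i))
    (h01 : v ⟨1, by omega⟩ < v ⟨0, by omega⟩)
    (htail : ∀ i j : Fin n, 2 ≤ (i : ℕ) → i < j → v j < v i)
    (hpos : ∀ i : Fin n, 2 ≤ (i : ℕ) → 0 < v i) :
    (v ⟨0, by omega⟩ = (k : ℤ) ∨ v ⟨0, by omega⟩ = -(k : ℤ) ∨
      v ⟨1, by omega⟩ = (k : ℤ) ∨ v ⟨1, by omega⟩ = -(k : ℤ)) ∧
    (((v ⟨0, by omega⟩ = (k : ℤ) ∨ v ⟨0, by omega⟩ = -(k : ℤ)) ∧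
      (v ⟨1, by omega⟩ = (k : ℤ) ∨ v ⟨1, by omega⟩ = -(k : ℤ))) →
        v ⟨0, by omega⟩ = (k : ℤ) ∧ v ⟨1, by omega⟩ = -(k : ℤ)) := by
  obtain ⟨σ, ε, hε, hvε⟩ := hv
  have hkZ : (1 : ℤ) ≤ (k : ℤ) := by exact_mod_cast hk1
  constructor
  · by_contra h
    push_neg at h
    obtain ⟨h0, h0', h1, h1'⟩ := h
    -- the two indices where lam = k
    have hi1 : n - 1 - k < n := by omega
    have hi2 : n - k < n := by omega
    set i1 : Fin n := ⟨n - 1 - k, hi1⟩ with hdef1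
    set i2 : Fin n := ⟨n - k, hi2⟩ with hdef2
    have hl1 : lam i1 = (k : ℤ) := by
      rw [hlam]
      simp only [hdef1]
      rw [if_pos (le_refl _)]
      omega
    have hl2 : lam i2 = (k : ℤ) := by
      rw [hlam]
      simp only [hdef2]
      rw [if_neg (by omega)]
      omega
    set j1 : Fin n := σ.symm i1 with hj1
    set j2 : Fin n := σ.symm i2 with hj2
    have hne : j1 ≠ j2 := by
      intro hcon
      have : i1 = i2 := by
        have := congrArg σ hcon
        simpa [hj1, hj2] using this
      simp [hdef1, hdef2, Fin.ext_iff] at this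
      omega
    have hs1 : σ j1 = i1 := by rw [hj1]; exact Equiv.apply_symm_apply σ i1
    have hs2 : σ j2 = i2 := by rw [hj2]; exact Equiv.apply_symm_apply σ i2
    have hvj1 : v j1 = (k : ℤ) ∨ v j1 = -(k : ℤ) := by
      have := hvε j1
      rw [hs1, hl1] at this
      rcases hε j1 with he | he <;> rw [he] at this <;> omega
    have hvj2 : v j2 = (k : ℤ) ∨ v j2 = -(k : ℤ) := by
      have := hvε j2
      rw [hs2, hl2] at this
      rcases hε j2 with he | he <;> rw [he] at this <;> omega
    have hge : ∀ j : Fin n, v j = (k : ℤ) ∨ v j = -(k : ℤ) → 2 ≤ (j : ℕ) := by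
      intro j hj
      by_contra hcon
      have : (j : ℕ) = 0 ∨ (j : ℕ) = 1 := by omega
      rcases this with hc | hc
      · have : j = ⟨0, by omega⟩ := Fin.ext hc
        rw [this] at hj; tauto
      · have : j = ⟨1, by omega⟩ := Fin.ext hc
        rw [this] at hj; tauto
    have h2j1 := hge j1 hvj1
    have h2j2 := hge j2 hvj2
    have hp1 := hpos j1 h2j1
    have hp2 := hpos j2 h2j2
    have hv1 : v j1 = (k : ℤ) := by omega
    have hv2 : v j2 = (k : ℤ) := by omega
    rcases lt_trichotomy j1 j2 with hlt | heq | hlt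
    · have := htail j1 j2 h2j1 hlt; omega
    · exact hne heq
    · have := htail j2 j1 h2j2 hlt; omega
  · rintro ⟨ha, hb⟩
    rcases ha with ha | ha <;> rcases hb with hb | hb <;> constructor <;> omega
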